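/- Let G be a finite p-group of nilpotence class 2. Then IA(G) ≅ Hom(G/G', G') and IA(G)* ≅ Hom(G/Z(G), G'), where IA(G)* denotes the IA-automorphisms fixing Z(G) pointwise. -/

import Mathlib

/-- The subgroup of `MulAut G` of automorphisms `α` with `x⁻¹ * α x ∈ X` for all `x`
(automorphisms centralizing `G/X`). -/
def autCentMod {G : Type*} [Group G] (X : Subgroup G) : Subgroup (MulAut G) where
  carrier := {α | ∀ x : G, x⁻¹ * α x ∈ X}
  one_mem' := by intro x; simpa using X.one_mem
  mul_mem' := by
    intro α β hα hβ x
    have h := X.mul_mem (hβ x) (hα (β x))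
    simpa [mul_assoc] using h
  inv_mem' := by
    intro α hα x
    have h := X.inv_mem (hα (α⁻¹ x))
    simpa [MulAut.apply_inv_self, mul_inv_rev] using h

/-- The subgroup of `MulAut G` of automorphisms fixing `Y` pointwise. -/
def autFix {G : Type*} [Group G] (Y : Subgroup G) : Subgroup (MulAut G) where
  carrier := {α | ∀ y ∈ Y, α y = y}
  one_mem' := by intro y _; rfl
  mul_mem' := by
    intro α β hα hβ y hy
    have : (α * β) y = α (β y) := rfl
    rw [this, hβ y hy, hα y hy]
  inv_mem' := by
    intro α hα y hy
    have := hα y hy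
    calc α⁻¹ y = α⁻¹ (α y) := by rw [this]
    _ = y := by simp

/-- A group is purely non-abelian if it has no nontrivial abelian (internal) direct factor. -/
def IsPurelyNonabelian (G : Type*) [Group G] : Prop :=
  ¬ ∃ H K : Subgroup G, H ≠ ⊥ ∧ H ≤ Subgroup.center G ∧ K.Normal ∧ IsCompl H K

/-- `X` has invariant-factor decomposition `p^(e 0) ≥ p^(e 1) ≥ …`. -/
def HasDecomp (p : ℕ) (X : Type*) [Group X] {m : ℕ} (e : Fin m → ℕ) : Prop :=
  Antitone e ∧ (∀ j, 0 < e j) ∧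
    Nonempty (X ≃* ((j : Fin m) → Multiplicative (ZMod (p ^ e j))))

/-- `n ≤ var(X, Y)`, where `var(X,Y) = p^(β r)` and `r` is the largest index at which the
invariant factor exponents `β` of `X` and `γ` of `Y` differ. -/
def varLe (p : ℕ) (X Y : Type*) [Group X] [Group Y] (n : ℕ) : Prop :=
  ∀ (m : ℕ) (β γ : Fin m → ℕ), HasDecomp p X β → HasDecomp p Y γ →
    ∀ r : Fin m, β r < γ r → (∀ j, r < j → β j = γ j) → n ≤ p ^ β r

/-- `n = var(X, Y)`. -/
def varEq (p : ℕ) (X Y : Type*) [Group X] [Group Y] (n : ℕ) : Prop :=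
  ∀ (m : ℕ) (β γ : Fin m → ℕ), HasDecomp p X β → HasDecomp p Y γ →
    ∀ r : Fin m, β r < γ r → (∀ j, r < j → β j = γ j) → n = p ^ β r

/-- A central subgroup is commutative. -/
@[reducible]
def centralCommGroup {G : Type*} [Group G] {X : Subgroup G}
    (hX : X ≤ Subgroup.center G) : CommGroup ↥X :=
  { (inferInstance : Group ↥X) with
    mul_comm := fun a b => Subtype.ext (Subgroup.mem_center_iff.mp (hX b.2) a.1) }

/-!
Let `A ≤ Z(G)` and `A ≤ N ⊴ G`. An automorphism `α` with `x⁻¹ α(x) ∈ A` for all `x` is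
determined by its displacement `x ↦ x⁻¹ α(x)`, which is a homomorphism `G → A` because `A` is
central, and which factors through `G/N` exactly when `α` fixes `N`. Conversely a homomorphism
`f : G/N → A` gives the automorphism `x ↦ x f(xN)` with inverse `x ↦ x f(xN)⁻¹`, and since
`A ≤ N` composing two of these multiplies the homomorphisms. Hence `IA_A(G) ∩ Fix(N) ≅ Hom(G/N, A)`.
For `A = G'` the second claim is the case `N = Z(G)`, and the first is the case `N = G'`:
such an `α` fixes `G'` pointwise, as `α[a, b] = [az, bw] = [a, b]` for central `z, w`.
-/

section

open Subgroup QuotientGroup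
open scoped commutatorElement

variable {G : Type*} [Group G] {A N : Subgroup G}

theorem commutatorElement_mul_mul_of_mem_center {z w : G} (hz : z ∈ center G)
    (hw : w ∈ center G) (a b : G) : ⁅a * z, b * w⁆ = ⁅a, b⁆ := by
  have hzb : ⁅z, b * w⁆ = 1 :=
    commutatorElement_eq_one_iff_mul_comm.2 (mem_center_iff.mp hz _).symm
  have haw : ⁅a, w⁆ = 1 := commutatorElement_eq_one_iff_mul_comm.2 (mem_center_iff.mp hw _)
  rw [commutatorElement_mul_left_eq_conj_mul, hzb, commutatorElement_mul_right_eq_mul_conj, haw]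
  group

theorem autCentMod_le_autFix_commutator (hA : A ≤ center G) :
    autCentMod A ≤ autFix (commutator G) := by
  intro α hα y hy
  rw [commutator_eq_closure] at hy
  induction hy using closure_induction with
  | mem g hg =>
    obtain ⟨a, b, rfl⟩ := hg
    rw [map_commutatorElement, ← mul_inv_cancel_left a (α a), ← mul_inv_cancel_left b (α b),
      commutatorElement_mul_mul_of_mem_center (hA (hα a)) (hA (hα b))]
  | one => exact map_one α
  | mul x y _ _ hx hy => rw [map_mul, hx, hy]
  | inv x _ hx => rw [map_inv, hx]

def autCentModDisplacement (hA : A ≤ center G) (α : MulAut G) (hα : α ∈ autCentMod A) :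
    G →* A where
  toFun x := ⟨x⁻¹ * α x, hα x⟩
  map_one' := Subtype.ext (by simp)
  map_mul' x y := Subtype.ext <| by
    have hcomm := mem_center_iff.mp (hA (hα x)) y⁻¹
    simp only [map_mul, mul_inv_rev, MulMemClass.mk_mul_mk]
    rw [mul_assoc y⁻¹, ← mul_assoc x⁻¹, ← mul_assoc y⁻¹, hcomm, mul_assoc, mul_assoc]

variable [N.Normal]

def twistAut (hA : A ≤ center G) (hAN : A ≤ N) (f : G ⧸ N →* A) : MulAut G where
  toFun x := x * f x
  invFun x := x * (f x : G)⁻¹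
  left_inv x := by simp only [mk_mul_of_mem x (hAN (f x).2), mul_inv_cancel_right]
  right_inv x := by
    simp only [mk_mul_of_mem x (hAN (inv_mem (f x).2)), inv_mul_cancel_right]
  map_mul' x y := by
    rw [QuotientGroup.mk_mul, map_mul, coe_mul, mul_assoc x, ← mul_assoc y,
      mem_center_iff.mp (hA (f x).2) y]
    simp only [mul_assoc]

theorem twistAut_apply (hA : A ≤ center G) (hAN : A ≤ N) (f : G ⧸ N →* A) (x : G) :
    twistAut hA hAN f x = x * f x := rfl

theorem twistAut_injective (hA : A ≤ center G) (hAN : A ≤ N) :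
    Function.Injective (twistAut hA hAN) := by
  intro f g hfg
  refine monoidHom_ext N (MonoidHom.ext fun x => Subtype.ext ?_)
  simpa [twistAut_apply] using DFunLike.congr_fun hfg x

theorem range_twistAut (hA : A ≤ center G) (hAN : A ≤ N) :
    Set.range (twistAut hA hAN) = autCentMod A ⊓ autFix N := by
  ext α
  constructor
  · rintro ⟨f, rfl⟩
    refine ⟨fun x => ?_, fun n hn => ?_⟩
    · simp [twistAut_apply]
    · simp [twistAut_apply, (QuotientGroup.eq_one_iff n).2 hn]
  · rintro ⟨hα, hfix⟩
    refine ⟨lift N (autCentModDisplacement hA α hα) fun n hn => ?_, ?_⟩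
    · exact Subtype.ext (by simp [autCentModDisplacement, hfix n hn])
    · ext x
      simp [twistAut_apply, autCentModDisplacement]

def twistAutHom (hA : A ≤ center G) (hAN : A ≤ N) :
    letI := centralCommGroup hA
    (G ⧸ N →* A) →* MulAut G :=
  letI := centralCommGroup hA
  { toFun := twistAut hA hAN
    map_one' := by ext x; simp [twistAut_apply]
    map_mul' f g := by
      ext x
      simp only [twistAut_apply, MulAut.mul_apply, mk_mul_of_mem x (hAN (g x).2),
        MonoidHom.mul_apply, coe_mul, mul_assoc, mul_comm (f x)] }

noncomputable def autCentModInfAutFixEquiv (hA : A ≤ center G) (hAN : A ≤ N) :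
    letI := centralCommGroup hA
    ↥(autCentMod A ⊓ autFix N) ≃* (G ⧸ N →* A) :=
  letI := centralCommGroup hA
  ((MonoidHom.ofInjective (f := twistAutHom hA hAN) (twistAut_injective hA hAN)).trans
    (MulEquiv.subgroupCongr (SetLike.coe_injective <|
      (MonoidHom.coe_range _).trans (range_twistAut hA hAN)))).symm

end

theorem IA_iso_hom_general {G : Type*} [Group G]
    (hle : commutator G ≤ Subgroup.center G) :
    letI : CommGroup ↥(commutator G) := centralCommGroup hle
    Nonempty (↥(autCentMod (commutator G)) ≃*
        ((G ⧸ commutator G) →* ↥(commutator G))) ∧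
      Nonempty (↥(autCentMod (commutator G) ⊓ autFix (Subgroup.center G)) ≃*
        ((G ⧸ Subgroup.center G) →* ↥(commutator G))) := by
  let := centralCommGroup hle
  have hIA : autCentMod (commutator G) ⊓ autFix (commutator G) = autCentMod (commutator G) :=
    inf_eq_left.2 (autCentMod_le_autFix_commutator hle)
  exact ⟨⟨(MulEquiv.subgroupCongr hIA.symm).trans (autCentModInfAutFixEquiv hle le_rfl)⟩,
    ⟨autCentModInfAutFixEquiv hle hle⟩⟩

/-- For a finite `p`-group `G` of nilpotence class 2 (i.e. `⊥ ≠ G' ≤ Z(G)`),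
`IA(G) ≃ Hom(G/G', G')` and `IA(G)* ≃ Hom(G/Z(G), G')`. -/
theorem IA_iso_hom {p : ℕ} (hp : p.Prime) {G : Type*} [Group G] [Fintype G]
    (hG : IsPGroup p G)
    (hle : commutator G ≤ Subgroup.center G) (hne : commutator G ≠ ⊥) :
    letI : CommGroup ↥(commutator G) := centralCommGroup hle
    Nonempty (↥(autCentMod (commutator G)) ≃*
        ((G ⧸ commutator G) →* ↥(commutator G))) ∧
      Nonempty (↥(autCentMod (commutator G) ⊓ autFix (Subgroup.center G)) ≃*
        ((G ⧸ Subgroup.center G) →* ↥(commutator G))) :=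
  IA_iso_hom_general hle
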